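/- arXiv:1012.4994 — 2 statements merged into one kernel-verified Lean document; each statement's English description precedes it below -/
import Mathlib

section
/- Let P ∈ H^s_{k-1}, i.e. P is a homogeneous polynomial s-form of degree k-1 on ℝ^m with dP = 0 and d*P = 0. Then (d+d*)(xP) = (k-1+m-s)P and (d+d*)(x*P) = (k-1+s)P. -/
open MvPolynomial Finset

noncomputable section

/-- Polynomial differential forms on ℝ^m: a coefficient polynomial for each
increasing multi-index `I ⊆ {1,…,m}` (representing `dx_I`). -/
abbrev PForm (m : ℕ) := Finset (Fin m) → MvPolynomial (Fin m) ℝ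

/-- The sign `(-1)^{#{i ∈ I : i < j}}`. -/
def sgn (m : ℕ) (j : Fin m) (I : Finset (Fin m)) : ℝ :=
  (-1 : ℝ) ^ (I.filter (fun i => i < j)).card

/-- Exterior multiplication `dx_j ∧ ·`. -/
def wedgeOp (m : ℕ) (j : Fin m) : PForm m →ₗ[ℝ] PForm m where
  toFun P I := if j ∈ I then sgn m j I • P (I.erase j) else 0
  map_add' P Q := by
    funext I; by_cases h : j ∈ I <;> simp [h, smul_add]
  map_smul' c P := by
    funext I; by_cases h : j ∈ I <;> simp [h, smul_smul, mul_comm]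

/-- Contraction (interior product) `dx_j ⌟ ·`. -/
def contrOp (m : ℕ) (j : Fin m) : PForm m →ₗ[ℝ] PForm m where
  toFun P I := if j ∈ I then 0 else sgn m j I • P (insert j I)
  map_add' P Q := by
    funext I; by_cases h : j ∈ I <;> simp [h, smul_add]
  map_smul' c P := by
    funext I; by_cases h : j ∈ I <;> simp [h, smul_smul, mul_comm]

/-- Multiplication of the coefficients by the variable `x_j`. -/
def mulXOp (m : ℕ) (j : Fin m) : PForm m →ₗ[ℝ] PForm m where
  toFun P I := X j * P I
  map_add' P Q := by funext I; simp [mul_add]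
  map_smul' c P := by funext I; simp [mul_smul_comm]

/-- Partial derivative `∂_{x_j}` of the coefficients. -/
def pderivOp (m : ℕ) (j : Fin m) : PForm m →ₗ[ℝ] PForm m where
  toFun P I := pderiv j (P I)
  map_add' P Q := by funext I; simp
  map_smul' c P := by funext I; simp

/-- `x = -∑_j x_j dx_j ∧`. -/
def xOp (m : ℕ) : PForm m →ₗ[ℝ] PForm m := - ∑ j, mulXOp m j ∘ₗ wedgeOp m j

/-- `x* = ∑_j x_j dx_j ⌟`. -/
def xStarOp (m : ℕ) : PForm m →ₗ[ℝ] PForm m := ∑ j, mulXOp m j ∘ₗ contrOp m j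

/-- The de Rham differential `d = ∑_j ∂_{x_j} dx_j ∧`. -/
def dOp (m : ℕ) : PForm m →ₗ[ℝ] PForm m := ∑ j, wedgeOp m j ∘ₗ pderivOp m j

/-- Its formal adjoint `d* = -∑_j ∂_{x_j} dx_j ⌟`. -/
def dStarOp (m : ℕ) : PForm m →ₗ[ℝ] PForm m := - ∑ j, contrOp m j ∘ₗ pderivOp m j

/-- The Euler operator `E = ∑_j x_j ∂_{x_j}`. -/
def eulerOp (m : ℕ) : PForm m →ₗ[ℝ] PForm m := ∑ j, mulXOp m j ∘ₗ pderivOp m j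

/-- The skew Euler operator `Ê = ∑_j (dx_j∧)(dx_j⌟)`. -/
def skewEulerOp (m : ℕ) : PForm m →ₗ[ℝ] PForm m := ∑ j, wedgeOp m j ∘ₗ contrOp m j

/-- The componentwise Laplacian `Δ = ∑_j ∂²_{x_j}`. -/
def lapOp (m : ℕ) : PForm m →ₗ[ℝ] PForm m := ∑ j, pderivOp m j ∘ₗ pderivOp m j

/-- Multiplication by `r² = x_1² + ⋯ + x_m²`. -/
def r2Op (m : ℕ) : PForm m →ₗ[ℝ] PForm m := ∑ j, mulXOp m j ∘ₗ mulXOp m j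

/-- `P` is an `s`-form: only components `dx_I` with `|I| = s` occur. -/
def IsSForm (m s : ℕ) (P : PForm m) : Prop := ∀ I : Finset (Fin m), I.card ≠ s → P I = 0

/-- All coefficients of `P` are homogeneous polynomials of degree `k`. -/
def IsHomForm (m k : ℕ) (P : PForm m) : Prop := ∀ I : Finset (Fin m), (P I).IsHomogeneous k

/-- `H^s_k`: homogeneous polynomial `s`-forms of degree `k` solving the
Hodge–de Rham system `dP = 0`, `d*P = 0`. -/
def Hset (m s k : ℕ) : Set (PForm m) :=
  {P | IsSForm m s P ∧ IsHomForm m k P ∧ dOp m P = 0 ∧ dStarOp m P = 0}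

/-- `ℳ_k`: homogeneous degree-`k` polynomial forms with `(d + d*)P = 0`. -/
def Mk (m k : ℕ) : Set (PForm m) :=
  {P | IsHomForm m k P ∧ (dOp m + dStarOp m) P = 0}

/-- `M_{s,k} = [(k-1+m-s)x* - (k-1+s)x] H^s_{k-1}`. -/
def Mset (m s k : ℕ) : Set (PForm m) :=
  (⇑(((k : ℝ) - 1 + m - s) • xStarOp m - ((k : ℝ) - 1 + s) • xOp m)) '' Hset m s (k - 1)

end

noncomputable section HelperLemmas
variable {m : ℕ}

lemma wedgeOp_apply (j : Fin m) (P : PForm m) (I : Finset (Fin m)) :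
    wedgeOp m j P I = if j ∈ I then sgn m j I • P (I.erase j) else 0 := rfl

lemma contrOp_apply (j : Fin m) (P : PForm m) (I : Finset (Fin m)) :
    contrOp m j P I = if j ∈ I then 0 else sgn m j I • P (insert j I) := rfl

lemma mulXOp_apply (j : Fin m) (P : PForm m) (I : Finset (Fin m)) :
    mulXOp m j P I = X j * P I := rfl

lemma pderivOp_apply (j : Fin m) (P : PForm m) (I : Finset (Fin m)) :
    pderivOp m j P I = pderiv j (P I) := rfl

lemma sgn_sq (j : Fin m) (I : Finset (Fin m)) : sgn m j I * sgn m j I = 1 := by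
  rw [sgn, ← pow_add, ← two_mul, pow_mul]
  norm_num

lemma sgn_erase (j l : Fin m) (I : Finset (Fin m)) (h : j ∈ I) :
    sgn m l (I.erase j) = (if j < l then -1 else 1) * sgn m l I := by
  unfold sgn
  rw [Finset.filter_erase]
  by_cases hjl : j < l
  · have hmem : j ∈ I.filter (fun i => i < l) := Finset.mem_filter.2 ⟨h, hjl⟩
    have hc : 1 ≤ (I.filter (fun i => i < l)).card := Finset.card_pos.2 ⟨j, hmem⟩
    rw [Finset.card_erase_of_mem hmem, if_pos hjl]
    have : (-1 : ℝ) ^ (I.filter (fun i => i < l)).card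
        = (-1 : ℝ) ^ ((I.filter (fun i => i < l)).card - 1) * (-1) := by
      rw [← pow_succ, Nat.sub_add_cancel hc]
    rw [this]; ring
  · rw [Finset.erase_eq_of_notMem (by simp [hjl]), if_neg hjl, one_mul]

lemma sgn_insert (j l : Fin m) (I : Finset (Fin m)) (h : j ∉ I) :
    sgn m l (insert j I) = (if j < l then -1 else 1) * sgn m l I := by
  unfold sgn
  rw [Finset.filter_insert]
  by_cases hjl : j < l
  · have hmem : j ∉ I.filter (fun i => i < l) := fun hx => h (Finset.mem_filter.1 hx).1
    rw [if_pos hjl, if_pos hjl, Finset.card_insert_of_notMem hmem, pow_succ]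
    ring
  · rw [if_neg hjl, if_neg hjl, one_mul]

lemma sgn_erase_self (j : Fin m) (I : Finset (Fin m)) : sgn m j (I.erase j) = sgn m j I := by
  unfold sgn
  rw [Finset.filter_erase, Finset.erase_eq_of_notMem (by simp)]

lemma sgn_insert_self (j : Fin m) (I : Finset (Fin m)) : sgn m j (insert j I) = sgn m j I := by
  unfold sgn
  rw [Finset.filter_insert, if_neg (lt_irrefl j)]

end HelperLemmas

noncomputable section AntiLemmas
variable {m : ℕ}

lemma erase_erase_comm (j l : Fin m) (I : Finset (Fin m)) :
    (I.erase j).erase l = (I.erase l).erase j := by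
  ext x; simp only [Finset.mem_erase]; tauto

lemma ite_sign_mul (j l : Fin m) (h : j ≠ l) :
    (if j < l then (-1:ℝ) else 1) = -(if l < j then (-1:ℝ) else 1) := by
  rcases lt_or_gt_of_ne h with h1 | h1
  · rw [if_pos h1, if_neg (asymm h1)]
  · rw [if_neg (asymm h1), if_pos h1]; norm_num

lemma wedge_wedge_self (j : Fin m) (Q : PForm m) :
    wedgeOp m j (wedgeOp m j Q) = 0 := by
  funext I
  simp [wedgeOp_apply, Finset.notMem_erase]

lemma contr_contr_self (j : Fin m) (Q : PForm m) :
    contrOp m j (contrOp m j Q) = 0 := by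
  funext I
  by_cases h : j ∈ I <;> simp [contrOp_apply, h]

lemma wedge_wedge (j l : Fin m) (Q : PForm m) :
    wedgeOp m j (wedgeOp m l Q) = - wedgeOp m l (wedgeOp m j Q) := by
  by_cases hjl : j = l
  · subst hjl; simp [wedge_wedge_self]
  funext I
  show _ = -(wedgeOp m l (wedgeOp m j Q) I)
  by_cases hj : j ∈ I <;> by_cases hl : l ∈ I
  · rw [wedgeOp_apply, if_pos hj, wedgeOp_apply,
      if_pos (Finset.mem_erase.2 ⟨Ne.symm hjl, hl⟩),
      wedgeOp_apply, if_pos hl, wedgeOp_apply,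
      if_pos (Finset.mem_erase.2 ⟨hjl, hj⟩), erase_erase_comm]
    rw [smul_smul, smul_smul, ← neg_smul]
    congr 1
    rw [sgn_erase j l I hj, sgn_erase l j I hl, ite_sign_mul j l hjl]
    ring
  · simp [wedgeOp_apply, hj, hl, Finset.mem_erase, hjl]
  · simp [wedgeOp_apply, hj, hl, Finset.mem_erase, Ne.symm hjl]
  · simp [wedgeOp_apply, hj, hl, Finset.mem_erase, hjl, Ne.symm hjl]

lemma contr_contr (j l : Fin m) (Q : PForm m) :
    contrOp m j (contrOp m l Q) = - contrOp m l (contrOp m j Q) := by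
  by_cases hjl : j = l
  · subst hjl; simp [contr_contr_self]
  funext I
  show _ = -(contrOp m l (contrOp m j Q) I)
  by_cases hj : j ∈ I <;> by_cases hl : l ∈ I
  · simp [contrOp_apply, hj, hl]
  · simp [contrOp_apply, hj, hl, Finset.mem_insert, hjl, Ne.symm hjl]
  · simp [contrOp_apply, hj, hl, Finset.mem_insert, hjl, Ne.symm hjl]
  · rw [contrOp_apply, if_neg hj, contrOp_apply,
      if_neg (by rw [Finset.mem_insert]; exact fun h => h.elim (fun h1 => hjl h1.symm) hl),
      contrOp_apply, if_neg hl, contrOp_apply,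
      if_neg (by rw [Finset.mem_insert]; exact fun h => h.elim hjl hj),
      Finset.insert_comm]
    rw [smul_smul, smul_smul, ← neg_smul]
    congr 1
    rw [sgn_insert j l I hj, sgn_insert l j I hl, ite_sign_mul j l hjl]
    ring

lemma contr_wedge (j l : Fin m) (Q : PForm m) :
    contrOp m j (wedgeOp m l Q)
      = (if j = l then Q else 0) - wedgeOp m l (contrOp m j Q) := by
  by_cases hjl : j = l
  · subst hjl
    rw [if_pos rfl]
    funext I
    show _ = Q I - wedgeOp m j (contrOp m j Q) I
    by_cases hj : j ∈ I
    · rw [contrOp_apply, if_pos hj, wedgeOp_apply, if_pos hj, contrOp_apply,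
        if_neg (Finset.notMem_erase j I), Finset.insert_erase hj, smul_smul,
        sgn_erase_self, sgn_sq, one_smul]
      ring
    · rw [contrOp_apply, if_neg hj, wedgeOp_apply, if_pos (Finset.mem_insert_self j I),
        Finset.erase_insert hj, wedgeOp_apply, if_neg hj, smul_smul, sgn_insert_self,
        sgn_sq, one_smul, sub_zero]
  · funext I
    rw [if_neg hjl]
    show _ = (0 : PForm m) I - wedgeOp m l (contrOp m j Q) I
    rw [show (0 : PForm m) I = 0 from rfl, zero_sub]
    by_cases hj : j ∈ I <;> by_cases hl : l ∈ I
    · rw [contrOp_apply, if_pos hj, wedgeOp_apply, if_pos hl, contrOp_apply,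
        if_pos (Finset.mem_erase.2 ⟨hjl, hj⟩), smul_zero, neg_zero]
    · rw [contrOp_apply, if_pos hj, wedgeOp_apply, if_neg hl, neg_zero]
    · rw [contrOp_apply, if_neg hj, wedgeOp_apply,
        if_pos (Finset.mem_insert_of_mem hl),
        wedgeOp_apply, if_pos hl, contrOp_apply,
        if_neg (by rw [Finset.mem_erase]; exact fun h => hj h.2),
        Finset.erase_insert_of_ne hjl]
      rw [smul_smul, smul_smul, ← neg_smul]
      congr 1
      rw [sgn_insert j l I hj, sgn_erase l j I hl, ite_sign_mul j l hjl]
      ring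
    · rw [contrOp_apply, if_neg hj, wedgeOp_apply,
        if_neg (by rw [Finset.mem_insert]; exact fun h => h.elim (fun h1 => hjl h1.symm) hl),
        smul_zero, wedgeOp_apply, if_neg hl, neg_zero]

end AntiLemmas

noncomputable section CommLemmas
variable {m : ℕ}

lemma wedge_mulX (j l : Fin m) (Q : PForm m) :
    wedgeOp m j (mulXOp m l Q) = mulXOp m l (wedgeOp m j Q) := by
  funext I
  by_cases hj : j ∈ I <;>
    simp [wedgeOp_apply, mulXOp_apply, hj, mul_smul_comm]

lemma contr_mulX (j l : Fin m) (Q : PForm m) :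
    contrOp m j (mulXOp m l Q) = mulXOp m l (contrOp m j Q) := by
  funext I
  by_cases hj : j ∈ I <;>
    simp [contrOp_apply, mulXOp_apply, hj, mul_smul_comm]

lemma wedge_pderiv (j l : Fin m) (Q : PForm m) :
    wedgeOp m j (pderivOp m l Q) = pderivOp m l (wedgeOp m j Q) := by
  funext I
  by_cases hj : j ∈ I <;>
    simp [wedgeOp_apply, pderivOp_apply, hj, map_smul]

lemma contr_pderiv (j l : Fin m) (Q : PForm m) :
    contrOp m j (pderivOp m l Q) = pderivOp m l (contrOp m j Q) := by
  funext I
  by_cases hj : j ∈ I <;>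
    simp [contrOp_apply, pderivOp_apply, hj, map_smul]

lemma pderiv_mulX (j l : Fin m) (Q : PForm m) :
    pderivOp m j (mulXOp m l Q)
      = mulXOp m l (pderivOp m j Q) + (if j = l then Q else 0) := by
  funext I
  rw [Pi.add_apply, pderivOp_apply, mulXOp_apply, mulXOp_apply, pderivOp_apply, pderiv_mul]
  by_cases hjl : j = l
  · subst hjl
    rw [if_pos rfl, pderiv_X_self, one_mul, add_comm]
  · rw [if_neg hjl, pderiv_X_of_ne (fun h => hjl h.symm), zero_mul, zero_add,
      Pi.zero_apply, add_zero]

lemma euler_poly {n : ℕ} {p : MvPolynomial (Fin m) ℝ} (hp : p.IsHomogeneous n) :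
    ∑ j, X j * pderiv j p = (n : ℝ) • p := by
  conv_lhs => rw [p.as_sum]
  conv_rhs => rw [p.as_sum]
  rw [Finset.smul_sum]
  simp only [map_sum, Finset.mul_sum]
  rw [Finset.sum_comm]
  refine Finset.sum_congr rfl fun d hd => ?_
  have hdeg : d.degree = n := by
    by_contra h
    exact MvPolynomial.mem_support_iff.1 hd (hp.coeff_eq_zero h)
  have step : ∀ j : Fin m, X j * pderiv j (monomial d (coeff d p))
      = monomial d (coeff d p * (d j : ℝ)) := by
    intro j
    rw [pderiv_monomial]
    by_cases hdj : d j = 0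
    · simp only [hdj, Nat.cast_zero, mul_zero, map_zero]
    · have he : Finsupp.single j 1 + (d - Finsupp.single j 1) = d := by
        ext i
        rw [Finsupp.add_apply, Finsupp.tsub_apply]
        by_cases hij : j = i
        · subst hij; rw [Finsupp.single_eq_same]; omega
        · rw [Finsupp.single_eq_of_ne' hij]; omega
      rw [X, monomial_mul, one_mul, he]
  simp only [step]
  rw [← map_sum (monomial d), ← Finset.mul_sum]
  have hsum : ∑ j : Fin m, (d j : ℝ) = (n : ℝ) := by
    rw [← Nat.cast_sum]
    congr 1
    rw [← hdeg, Finsupp.degree]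
    exact (Finset.sum_subset (Finset.subset_univ _)
      (fun x _ hx => Finsupp.notMem_support_iff.1 hx)).symm
  rw [hsum, smul_monomial, smul_eq_mul]
  congr 1
  ring

lemma euler_form {n : ℕ} {P : PForm m} (hP : IsHomForm m n P) :
    eulerOp m P = (n : ℝ) • P := by
  funext I
  simp only [eulerOp, LinearMap.sum_apply, Finset.sum_apply, LinearMap.comp_apply,
    mulXOp_apply, pderivOp_apply]
  rw [euler_poly (hP I)]
  rfl

lemma skewEuler_form {s : ℕ} {P : PForm m} (hP : IsSForm m s P) :
    skewEulerOp m P = (s : ℝ) • P := by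
  funext I
  simp only [skewEulerOp, LinearMap.sum_apply, Finset.sum_apply, LinearMap.comp_apply]
  have step : ∀ j : Fin m, wedgeOp m j (contrOp m j P) I = if j ∈ I then P I else 0 := by
    intro j
    by_cases hj : j ∈ I
    · rw [wedgeOp_apply, if_pos hj, contrOp_apply, if_neg (Finset.notMem_erase j I),
        Finset.insert_erase hj, smul_smul, sgn_erase_self, sgn_sq, one_smul, if_pos hj]
    · rw [wedgeOp_apply, if_neg hj, if_neg hj]
  simp only [step]
  rw [Finset.sum_ite_mem, Finset.univ_inter, Finset.sum_const]
  show I.card • P I = ((s:ℝ) • P) I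
  by_cases hcard : I.card = s
  · rw [hcard]
    exact (Nat.cast_smul_eq_nsmul ℝ s (P I)).symm
  · rw [Pi.smul_apply, hP I hcard, smul_zero, smul_zero]

end CommLemmas

noncomputable section KeyLemmas
variable {m : ℕ}

lemma dOp_eq (Q : PForm m) : dOp m Q = ∑ j, wedgeOp m j (pderivOp m j Q) := by
  rw [dOp, LinearMap.sum_apply]; rfl

lemma dStarOp_eq (Q : PForm m) :
    dStarOp m Q = -∑ j, contrOp m j (pderivOp m j Q) := by
  rw [dStarOp, LinearMap.neg_apply, LinearMap.sum_apply]; rfl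

lemma xOp_eq (Q : PForm m) : xOp m Q = -∑ l, mulXOp m l (wedgeOp m l Q) := by
  rw [xOp, LinearMap.neg_apply, LinearMap.sum_apply]; rfl

lemma xStarOp_eq (Q : PForm m) : xStarOp m Q = ∑ l, mulXOp m l (contrOp m l Q) := by
  rw [xStarOp, LinearMap.sum_apply]; rfl

lemma eulerOp_eq (Q : PForm m) : eulerOp m Q = ∑ j, mulXOp m j (pderivOp m j Q) := by
  rw [eulerOp, LinearMap.sum_apply]; rfl

lemma skewEulerOp_eq (Q : PForm m) :
    skewEulerOp m Q = ∑ j, wedgeOp m j (contrOp m j Q) := by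
  rw [skewEulerOp, LinearMap.sum_apply]; rfl

lemma wedge_contr (j l : Fin m) (Q : PForm m) :
    wedgeOp m j (contrOp m l Q) = (if l = j then Q else 0) - contrOp m l (wedgeOp m j Q) := by
  have h := contr_wedge l j Q
  rw [eq_sub_iff_add_eq] at h ⊢
  rw [← h]; abel

lemma key1 {P : PForm m} (hd : dOp m P = 0) : dOp m (xOp m P) = 0 := by
  have h1 : ∀ j : Fin m, wedgeOp m j (pderivOp m j (xOp m P))
      = ∑ l, mulXOp m l (wedgeOp m l (wedgeOp m j (pderivOp m j P))) := by
    intro j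
    rw [xOp_eq, map_neg, map_neg, map_sum, map_sum, ← Finset.sum_neg_distrib]
    refine Finset.sum_congr rfl fun l _ => ?_
    rw [pderiv_mulX, map_add]
    have hz : wedgeOp m j (if j = l then wedgeOp m l P else 0) = 0 := by
      by_cases h : j = l
      · rw [if_pos h, h, wedge_wedge_self]
      · rw [if_neg h, map_zero]
    rw [hz, add_zero, wedge_mulX, ← wedge_pderiv l j P, wedge_wedge j l, map_neg, neg_neg]
  rw [dOp_eq]
  simp only [h1]
  rw [Finset.sum_comm]
  have h2 : ∀ l : Fin m, ∑ j, mulXOp m l (wedgeOp m l (wedgeOp m j (pderivOp m j P)))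
      = mulXOp m l (wedgeOp m l (dOp m P)) := by
    intro l
    rw [dOp_eq, map_sum, map_sum]
  simp only [h2, hd, map_zero, Finset.sum_const_zero]

lemma key4 {P : PForm m} (hds : dStarOp m P = 0) : dStarOp m (xStarOp m P) = 0 := by
  have h1 : ∀ j : Fin m, contrOp m j (pderivOp m j (xStarOp m P))
      = -∑ l, mulXOp m l (contrOp m l (contrOp m j (pderivOp m j P))) := by
    intro j
    rw [xStarOp_eq, map_sum, map_sum, ← Finset.sum_neg_distrib]
    refine Finset.sum_congr rfl fun l _ => ?_
    rw [pderiv_mulX, map_add]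
    have hz : contrOp m j (if j = l then contrOp m l P else 0) = 0 := by
      by_cases h : j = l
      · rw [if_pos h, h, contr_contr_self]
      · rw [if_neg h, map_zero]
    rw [hz, add_zero, contr_mulX, ← contr_pderiv l j P, contr_contr j l, map_neg]
  rw [dStarOp_eq]
  simp only [h1]
  rw [Finset.sum_neg_distrib, neg_neg, Finset.sum_comm]
  have h2 : ∀ l : Fin m, ∑ j, mulXOp m l (contrOp m l (contrOp m j (pderivOp m j P)))
      = mulXOp m l (contrOp m l (-(dStarOp m P))) := by
    intro l
    rw [dStarOp_eq, neg_neg, map_sum, map_sum]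
  simp only [h2, hds, neg_zero, map_zero, Finset.sum_const_zero]

end KeyLemmas

lemma key2 {m n s : ℕ} {P : PForm m} (hds : dStarOp m P = 0)
    (hS : IsSForm m s P) (hH : IsHomForm m n P) :
    dStarOp m (xOp m P) = (((n : ℝ) + m) - s) • P := by
  have hterm : ∀ j l : Fin m, contrOp m j (pderivOp m j (mulXOp m l (wedgeOp m l P)))
      = (if j = l then mulXOp m j (pderivOp m j P) else 0)
        - mulXOp m l (wedgeOp m l (contrOp m j (pderivOp m j P)))
        + (if j = l then contrOp m j (wedgeOp m j P) else 0) := by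
    intro j l
    by_cases h : j = l
    · subst h
      rw [if_pos rfl, if_pos rfl, pderiv_mulX, map_add, contr_mulX,
        ← wedge_pderiv j j P, contr_wedge j j, if_pos rfl, map_sub, if_pos rfl]
    · rw [if_neg h, if_neg h, pderiv_mulX, map_add, if_neg h, map_zero, add_zero,
        contr_mulX, ← wedge_pderiv l j P, contr_wedge j l, if_neg h, zero_sub, map_neg,
        zero_sub, add_zero]
  have h1 : ∀ j : Fin m, contrOp m j (pderivOp m j (xOp m P))
      = -(mulXOp m j (pderivOp m j P))
        + ∑ l, mulXOp m l (wedgeOp m l (contrOp m j (pderivOp m j P)))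
        - contrOp m j (wedgeOp m j P) := by
    intro j
    rw [xOp_eq, map_neg, map_neg, map_sum, map_sum,
      Finset.sum_congr rfl fun l _ => hterm j l,
      Finset.sum_add_distrib, Finset.sum_sub_distrib]
    simp only [Finset.sum_ite_eq, Finset.mem_univ, if_true]
    abel
  rw [dStarOp_eq]
  simp only [h1]
  rw [Finset.sum_sub_distrib, Finset.sum_add_distrib, Finset.sum_neg_distrib]
  have hzero : ∑ j, contrOp m j (pderivOp m j P) = 0 := by
    have h := dStarOp_eq P
    rw [hds, eq_comm, neg_eq_zero] at h
    exact h
  have hmid : ∑ j, ∑ l, mulXOp m l (wedgeOp m l (contrOp m j (pderivOp m j P))) = 0 := by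
    rw [Finset.sum_comm]
    have : ∀ l : Fin m, ∑ j, mulXOp m l (wedgeOp m l (contrOp m j (pderivOp m j P)))
        = mulXOp m l (wedgeOp m l (∑ j, contrOp m j (pderivOp m j P))) := by
      intro l
      rw [map_sum, map_sum]
    simp only [this, hzero, map_zero, Finset.sum_const_zero]
  have heuler : ∑ j, mulXOp m j (pderivOp m j P) = (n : ℝ) • P := by
    rw [← eulerOp_eq, euler_form hH]
  have hlast : ∑ j, contrOp m j (wedgeOp m j P) = (m : ℝ) • P - (s : ℝ) • P := by
    have hterm2 : ∀ j : Fin m, contrOp m j (wedgeOp m j P)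
        = P - wedgeOp m j (contrOp m j P) := by
      intro j
      rw [contr_wedge j j, if_pos rfl]
    rw [Finset.sum_congr rfl fun j _ => hterm2 j, Finset.sum_sub_distrib,
      Finset.sum_const, Finset.card_univ, Fintype.card_fin, ← skewEulerOp_eq,
      skewEuler_form hS, Nat.cast_smul_eq_nsmul ℝ m P]
  rw [hmid, heuler, hlast]
  module

lemma key3 {m n s : ℕ} {P : PForm m} (hd : dOp m P = 0)
    (hS : IsSForm m s P) (hH : IsHomForm m n P) :
    dOp m (xStarOp m P) = ((n : ℝ) + s) • P := by
  have hterm : ∀ j l : Fin m, wedgeOp m j (pderivOp m j (mulXOp m l (contrOp m l P)))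
      = (if l = j then mulXOp m j (pderivOp m j P) else 0)
        - mulXOp m l (contrOp m l (wedgeOp m j (pderivOp m j P)))
        + (if l = j then wedgeOp m j (contrOp m j P) else 0) := by
    intro j l
    by_cases h : l = j
    · subst h
      rw [if_pos rfl, if_pos rfl, pderiv_mulX, map_add, if_pos rfl, wedge_mulX,
        ← contr_pderiv l l P, wedge_contr l l, if_pos rfl, map_sub]
    · rw [if_neg h, if_neg h, pderiv_mulX, map_add, if_neg (fun hh => h hh.symm), map_zero,
        add_zero, wedge_mulX, ← contr_pderiv l j P, wedge_contr j l, if_neg h, zero_sub,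
        map_neg, zero_sub, add_zero]
  have h1 : ∀ j : Fin m, wedgeOp m j (pderivOp m j (xStarOp m P))
      = mulXOp m j (pderivOp m j P)
        - ∑ l, mulXOp m l (contrOp m l (wedgeOp m j (pderivOp m j P)))
        + wedgeOp m j (contrOp m j P) := by
    intro j
    rw [xStarOp_eq, map_sum, map_sum,
      Finset.sum_congr rfl fun l _ => hterm j l,
      Finset.sum_add_distrib, Finset.sum_sub_distrib]
    simp only [Finset.sum_ite_eq', Finset.mem_univ, if_true]
  rw [dOp_eq]
  simp only [h1]
  rw [Finset.sum_add_distrib, Finset.sum_sub_distrib]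
  have hzero : ∑ j, wedgeOp m j (pderivOp m j P) = 0 := by
    rw [← dOp_eq, hd]
  have hmid : ∑ j, ∑ l, mulXOp m l (contrOp m l (wedgeOp m j (pderivOp m j P))) = 0 := by
    rw [Finset.sum_comm]
    have : ∀ l : Fin m, ∑ j, mulXOp m l (contrOp m l (wedgeOp m j (pderivOp m j P)))
        = mulXOp m l (contrOp m l (∑ j, wedgeOp m j (pderivOp m j P))) := by
      intro l
      rw [map_sum, map_sum]
    simp only [this, hzero, map_zero, Finset.sum_const_zero]
  have heuler : ∑ j, mulXOp m j (pderivOp m j P) = (n : ℝ) • P := by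
    rw [← eulerOp_eq, euler_form hH]
  have hlast : ∑ j, wedgeOp m j (contrOp m j P) = (s : ℝ) • P := by
    rw [← skewEulerOp_eq, skewEuler_form hS]
  rw [hmid, heuler, hlast]
  module


/-- for `P ∈ H^s_{k-1}`, `(d+d*)(xP) = (k-1+m-s)P` and
`(d+d*)(x*P) = (k-1+s)P`. -/
theorem dPlusDStar_on_x_xStar (m s k : ℕ) (hk : 1 ≤ k) (P : PForm m)
    (hP : P ∈ Hset m s (k - 1)) :
    (dOp m + dStarOp m) (xOp m P) = ((k : ℝ) - 1 + m - s) • P ∧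
    (dOp m + dStarOp m) (xStarOp m P) = ((k : ℝ) - 1 + s) • P := by
  obtain ⟨hS, hH, hd, hds⟩ := hP
  have hcast : ((k - 1 : ℕ) : ℝ) = (k : ℝ) - 1 := by
    push_cast [hk]; ring
  constructor
  · rw [LinearMap.add_apply, key1 hd, zero_add, key2 hds hS hH, hcast]
  · rw [LinearMap.add_apply, key4 hds, add_zero, key3 hd hS hH, hcast]
end

section
/- For 1 ≤ s ≤ m-1 and k ≥ 1, the intersection of xH^s_{k-1} ⊕ x*H^s_{k-1} with the kernel of d+d* equals M_{s,k} = [(k-1+m-s)x* - (k-1+s)x]H^s_{k-1}. -/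
open MvPolynomial Finset

noncomputable section
open MvPolynomial Finset

namespace HodgeAux

variable {m : ℕ}

lemma sgn_insert (j l : Fin m) (I : Finset (Fin m)) (h : l ∉ I) :
    sgn m j (insert l I) = (if l < j then (-1 : ℝ) else 1) * sgn m j I := by
  unfold sgn
  rw [Finset.filter_insert]
  by_cases hlj : l < j
  · rw [if_pos hlj, if_pos hlj, Finset.card_insert_of_notMem (by simp [h]), pow_succ]
    ring
  · rw [if_neg hlj, if_neg hlj, one_mul]

lemma sgn_erase (j l : Fin m) (I : Finset (Fin m)) (h : l ∈ I) :
    sgn m j (I.erase l) = (if l < j then (-1 : ℝ) else 1) * sgn m j I := by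
  have h2 : l ∉ I.erase l := Finset.notMem_erase l I
  have h3 := sgn_insert j l (I.erase l) h2
  rw [Finset.insert_erase h] at h3
  by_cases hlj : l < j <;> simp only [hlj, if_true, if_false] at h3 ⊢ <;> linarith

lemma sgn_mul_self (j : Fin m) (I : Finset (Fin m)) : sgn m j I * sgn m j I = 1 := by
  unfold sgn
  rw [← pow_add]
  exact Even.neg_one_pow ⟨_, rfl⟩

lemma wedgeOp_apply (j : Fin m) (P : PForm m) (I : Finset (Fin m)) :
    wedgeOp m j P I = if j ∈ I then sgn m j I • P (I.erase j) else 0 := rfl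

lemma contrOp_apply (j : Fin m) (P : PForm m) (I : Finset (Fin m)) :
    contrOp m j P I = if j ∈ I then 0 else sgn m j I • P (insert j I) := rfl

lemma mulXOp_apply (j : Fin m) (P : PForm m) (I : Finset (Fin m)) :
    mulXOp m j P I = X j * P I := rfl

lemma pderivOp_apply (j : Fin m) (P : PForm m) (I : Finset (Fin m)) :
    pderivOp m j P I = pderiv j (P I) := rfl

end HodgeAux
end
noncomputable section
open MvPolynomial Finset
namespace HodgeAux
variable {m : ℕ}

example (j l : Fin m) : (wedgeOp m j * wedgeOp m l) = wedgeOp m j ∘ₗ wedgeOp m l := rfl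

lemma W_mul_W_self (j : Fin m) : wedgeOp m j * wedgeOp m j = 0 := by
  apply LinearMap.ext; intro P; funext I
  simp only [Module.End.mul_apply, wedgeOp_apply, LinearMap.zero_apply]
  by_cases hj : j ∈ I
  · simp [hj, Finset.notMem_erase, Pi.zero_apply]
  · simp [hj]

lemma C_mul_C_self (j : Fin m) : contrOp m j * contrOp m j = 0 := by
  apply LinearMap.ext; intro P; funext I
  simp only [Module.End.mul_apply, contrOp_apply, LinearMap.zero_apply]
  by_cases hj : j ∈ I
  · simp [hj]
  · simp [hj, Finset.mem_insert_self]

end HodgeAux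
end
noncomputable section
open MvPolynomial Finset
namespace HodgeAux
variable {m : ℕ}

lemma anticomm_WW (j l : Fin m) :
    wedgeOp m j * wedgeOp m l + wedgeOp m l * wedgeOp m j = 0 := by
  by_cases hjl : j = l
  · subst hjl; rw [W_mul_W_self]; simp
  apply LinearMap.ext; intro P; funext I
  simp only [LinearMap.add_apply, Module.End.mul_apply, wedgeOp_apply, LinearMap.zero_apply,
    Pi.add_apply, Pi.zero_apply]
  by_cases hj : j ∈ I
  · by_cases hl : l ∈ I
    · rw [if_pos hj, if_pos hl, if_pos (Finset.mem_erase.2 ⟨Ne.symm hjl, hl⟩),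
        if_pos (Finset.mem_erase.2 ⟨hjl, hj⟩), Finset.erase_right_comm (a := j) (b := l),
        sgn_erase l j I hj, sgn_erase j l I hl, smul_smul, smul_smul, ← add_smul]
      rcases lt_or_gt_of_ne hjl with h | h
      · rw [if_pos h, if_neg (asymm h)]; ring_nf; simp
      · rw [if_neg (asymm h), if_pos h]; ring_nf; simp
    · rw [if_neg hl, if_neg (fun hc => hl (Finset.mem_of_mem_erase hc))]
      simp [hj]
  · by_cases hl : l ∈ I
    · rw [if_neg hj, if_neg (fun hc => hj (Finset.mem_of_mem_erase hc))]
      simp [hl]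
    · simp [hj, hl]

lemma anticomm_CC (j l : Fin m) :
    contrOp m j * contrOp m l + contrOp m l * contrOp m j = 0 := by
  by_cases hjl : j = l
  · subst hjl; rw [C_mul_C_self]; simp
  apply LinearMap.ext; intro P; funext I
  simp only [LinearMap.add_apply, Module.End.mul_apply, contrOp_apply, LinearMap.zero_apply,
    Pi.add_apply, Pi.zero_apply]
  by_cases hj : j ∈ I
  · by_cases hl : l ∈ I
    · simp [hj, hl]
    · rw [if_pos hj, if_neg hl, if_pos (Finset.mem_insert_of_mem hj)]
      simp
  · by_cases hl : l ∈ I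
    · rw [if_neg hj, if_pos hl, if_pos (Finset.mem_insert_of_mem hl)]
      simp
    · rw [if_neg hj, if_neg hl,
        if_neg (by simp [Finset.mem_insert, hl, Ne.symm hjl]),
        if_neg (by simp [Finset.mem_insert, hj, hjl]),
        Finset.insert_comm (a := j) (b := l),
        sgn_insert l j I hj, sgn_insert j l I hl, smul_smul, smul_smul, ← add_smul]
      rcases lt_or_gt_of_ne hjl with h | h
      · rw [if_pos h, if_neg (asymm h)]; ring_nf; simp
      · rw [if_neg (asymm h), if_pos h]; ring_nf; simp

end HodgeAux
end
noncomputable section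
open MvPolynomial Finset
namespace HodgeAux
variable {m : ℕ}

lemma anticomm_WC (j l : Fin m) :
    wedgeOp m j * contrOp m l + contrOp m l * wedgeOp m j
      = if j = l then (1 : PForm m →ₗ[ℝ] PForm m) else 0 := by
  apply LinearMap.ext; intro P; funext I
  by_cases hjl : j = l
  · subst hjl
    simp only [LinearMap.add_apply, Module.End.mul_apply, wedgeOp_apply, contrOp_apply,
      if_pos rfl, Module.End.one_apply, Pi.add_apply]
    by_cases hj : j ∈ I
    · rw [if_pos hj, if_pos hj, if_neg (Finset.notMem_erase j I),
        Finset.insert_erase hj, sgn_erase j j I hj, if_neg (lt_irrefl j),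
        one_mul, smul_smul, sgn_mul_self, one_smul]
      simp
    · rw [if_neg hj, if_neg hj, if_pos (Finset.mem_insert_self j I),
        Finset.erase_insert hj, sgn_insert j j I hj, if_neg (lt_irrefl j),
        one_mul, smul_smul, sgn_mul_self, one_smul]
      simp
  · simp only [LinearMap.add_apply, Module.End.mul_apply, wedgeOp_apply, contrOp_apply,
      if_neg hjl, LinearMap.zero_apply, Pi.add_apply, Pi.zero_apply]
    by_cases hj : j ∈ I
    · by_cases hl : l ∈ I
      · rw [if_pos hj, if_pos hl, if_pos (Finset.mem_erase.2 ⟨Ne.symm hjl, hl⟩)]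
        simp
      · rw [if_pos hj, if_neg hl, if_neg (by simp [Finset.mem_erase, hl]),
          if_pos (Finset.mem_insert_of_mem hj),
          Finset.erase_insert_of_ne (Ne.symm hjl),
          sgn_erase l j I hj, sgn_insert j l I hl, smul_smul, smul_smul, ← add_smul]
        rcases lt_or_gt_of_ne hjl with h | h
        · rw [if_pos h, if_neg (asymm h)]; ring_nf; simp
        · rw [if_neg (asymm h), if_pos h]; ring_nf; simp
    · by_cases hl : l ∈ I
      · simp [hj, hl]
      · rw [if_neg hj, if_neg hl, if_neg (by simp [Finset.mem_insert, hj, hjl])]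
        simp
end HodgeAux
end
noncomputable section
open MvPolynomial Finset
namespace HodgeAux
variable {m : ℕ}

lemma comm_XW (j l : Fin m) : mulXOp m j * wedgeOp m l = wedgeOp m l * mulXOp m j := by
  apply LinearMap.ext; intro P; funext I
  simp only [Module.End.mul_apply, mulXOp_apply, wedgeOp_apply, mul_ite, mul_zero,
    mul_smul_comm]

lemma comm_XC (j l : Fin m) : mulXOp m j * contrOp m l = contrOp m l * mulXOp m j := by
  apply LinearMap.ext; intro P; funext I
  simp only [Module.End.mul_apply, mulXOp_apply, contrOp_apply, mul_ite, mul_zero,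
    mul_smul_comm]

lemma comm_DW (j l : Fin m) : pderivOp m j * wedgeOp m l = wedgeOp m l * pderivOp m j := by
  apply LinearMap.ext; intro P; funext I
  simp only [Module.End.mul_apply, pderivOp_apply, wedgeOp_apply, apply_ite (pderiv j),
    map_zero, Derivation.map_smul]

lemma comm_DC (j l : Fin m) : pderivOp m j * contrOp m l = contrOp m l * pderivOp m j := by
  apply LinearMap.ext; intro P; funext I
  simp only [Module.End.mul_apply, pderivOp_apply, contrOp_apply, apply_ite (pderiv j),
    map_zero, Derivation.map_smul]

lemma comm_DX (j l : Fin m) :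
    pderivOp m j * mulXOp m l
      = mulXOp m l * pderivOp m j + if j = l then (1 : PForm m →ₗ[ℝ] PForm m) else 0 := by
  apply LinearMap.ext; intro P; funext I
  simp only [Module.End.mul_apply, LinearMap.add_apply, pderivOp_apply, mulXOp_apply,
    Pi.add_apply, pderiv_mul, pderiv_X]
  by_cases hjl : j = l
  · subst hjl; simp [Pi.single_eq_same, add_comm]
  · simp [Pi.single_eq_of_ne (Ne.symm hjl), hjl]

end HodgeAux
end
noncomputable section
open MvPolynomial Finset
namespace HodgeAux
variable {m : ℕ}

lemma comm_DX_ne {j l : Fin m} (hjl : j ≠ l) :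
    pderivOp m j * mulXOp m l = mulXOp m l * pderivOp m j := by
  rw [comm_DX, if_neg hjl, add_zero]

lemma comm_DX_self (j : Fin m) :
    pderivOp m j * mulXOp m j = mulXOp m j * pderivOp m j + 1 := by
  rw [comm_DX, if_pos rfl]

set_option maxHeartbeats 1000000 in
lemma pair_WW (j l : Fin m) :
    (wedgeOp m j * pderivOp m j) * (mulXOp m l * wedgeOp m l)
      + (mulXOp m l * wedgeOp m l) * (wedgeOp m j * pderivOp m j) = 0 := by
  set W := wedgeOp m
  set D := pderivOp m
  set Xo := mulXOp m
  by_cases hjl : j = l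
  · subst hjl
    calc (W j * D j) * (Xo j * W j) + (Xo j * W j) * (W j * D j)
        = W j * (D j * Xo j) * W j + Xo j * (W j * W j) * D j := by noncomm_ring
      _ = W j * (Xo j * D j + 1) * W j + Xo j * (W j * W j) * D j := by rw [comm_DX_self]
      _ = Xo j * (W j * W j) * D j + W j * W j + Xo j * (W j * W j) * D j := by
          rw [show W j * (Xo j * D j + 1) * W j
              = (W j * Xo j) * (D j * W j) + W j * W j from by noncomm_ring,
            ← comm_XW j j, comm_DW j j]
          noncomm_ring
      _ = 0 := by rw [W_mul_W_self]; noncomm_ring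
  · calc (W j * D j) * (Xo l * W l) + (Xo l * W l) * (W j * D j)
        = W j * (D j * Xo l) * W l + Xo l * (W l * W j) * D j := by noncomm_ring
      _ = W j * (Xo l * D j) * W l + Xo l * (W l * W j) * D j := by rw [comm_DX_ne hjl]
      _ = Xo l * (W j * W l) * D j + Xo l * (W l * W j) * D j := by
          rw [show W j * (Xo l * D j) * W l = (W j * Xo l) * (D j * W l) from by noncomm_ring,
            ← comm_XW l j, comm_DW j l]
          noncomm_ring
      _ = Xo l * (W j * W l + W l * W j) * D j := by noncomm_ring
      _ = 0 := by rw [anticomm_WW]; noncomm_ring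

end HodgeAux
end
noncomputable section
open MvPolynomial Finset
namespace HodgeAux
variable {m : ℕ}

set_option maxHeartbeats 1000000 in
lemma pair_CC (j l : Fin m) :
    (contrOp m j * pderivOp m j) * (mulXOp m l * contrOp m l)
      + (mulXOp m l * contrOp m l) * (contrOp m j * pderivOp m j) = 0 := by
  set C := contrOp m
  set D := pderivOp m
  set Xo := mulXOp m
  by_cases hjl : j = l
  · subst hjl
    calc (C j * D j) * (Xo j * C j) + (Xo j * C j) * (C j * D j)
        = C j * (D j * Xo j) * C j + Xo j * (C j * C j) * D j := by noncomm_ring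
      _ = C j * (Xo j * D j + 1) * C j + Xo j * (C j * C j) * D j := by rw [comm_DX_self]
      _ = Xo j * (C j * C j) * D j + C j * C j + Xo j * (C j * C j) * D j := by
          rw [show C j * (Xo j * D j + 1) * C j
              = (C j * Xo j) * (D j * C j) + C j * C j from by noncomm_ring,
            ← comm_XC j j, comm_DC j j]
          noncomm_ring
      _ = 0 := by rw [C_mul_C_self]; noncomm_ring
  · calc (C j * D j) * (Xo l * C l) + (Xo l * C l) * (C j * D j)
        = C j * (D j * Xo l) * C l + Xo l * (C l * C j) * D j := by noncomm_ring
      _ = C j * (Xo l * D j) * C l + Xo l * (C l * C j) * D j := by rw [comm_DX_ne hjl]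
      _ = Xo l * (C j * C l) * D j + Xo l * (C l * C j) * D j := by
          rw [show C j * (Xo l * D j) * C l = (C j * Xo l) * (D j * C l) from by noncomm_ring,
            ← comm_XC l j, comm_DC j l]
          noncomm_ring
      _ = Xo l * (C j * C l + C l * C j) * D j := by noncomm_ring
      _ = 0 := by rw [anticomm_CC]; noncomm_ring

set_option maxHeartbeats 1000000 in
lemma pair_WC (j l : Fin m) :
    (wedgeOp m j * pderivOp m j) * (mulXOp m l * contrOp m l)
      + (mulXOp m l * contrOp m l) * (wedgeOp m j * pderivOp m j)
      = if j = l then mulXOp m j * pderivOp m j + wedgeOp m j * contrOp m j else 0 := by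
  set W := wedgeOp m
  set C := contrOp m
  set D := pderivOp m
  set Xo := mulXOp m
  by_cases hjl : j = l
  · subst hjl
    rw [if_pos rfl]
    calc (W j * D j) * (Xo j * C j) + (Xo j * C j) * (W j * D j)
        = W j * (D j * Xo j) * C j + Xo j * (C j * W j) * D j := by noncomm_ring
      _ = W j * (Xo j * D j + 1) * C j + Xo j * (C j * W j) * D j := by rw [comm_DX_self]
      _ = Xo j * (W j * C j) * D j + W j * C j + Xo j * (C j * W j) * D j := by
          rw [show W j * (Xo j * D j + 1) * C j
              = (W j * Xo j) * (D j * C j) + W j * C j from by noncomm_ring,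
            ← comm_XW j j, comm_DC j j]
          noncomm_ring
      _ = Xo j * (W j * C j + C j * W j) * D j + W j * C j := by noncomm_ring
      _ = Xo j * D j + W j * C j := by rw [anticomm_WC, if_pos rfl]; noncomm_ring
  · rw [if_neg hjl]
    calc (W j * D j) * (Xo l * C l) + (Xo l * C l) * (W j * D j)
        = W j * (D j * Xo l) * C l + Xo l * (C l * W j) * D j := by noncomm_ring
      _ = W j * (Xo l * D j) * C l + Xo l * (C l * W j) * D j := by rw [comm_DX_ne hjl]
      _ = Xo l * (W j * C l) * D j + Xo l * (C l * W j) * D j := by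
          rw [show W j * (Xo l * D j) * C l = (W j * Xo l) * (D j * C l) from by noncomm_ring,
            ← comm_XW l j, comm_DC j l]
          noncomm_ring
      _ = Xo l * (W j * C l + C l * W j) * D j := by noncomm_ring
      _ = 0 := by rw [anticomm_WC, if_neg hjl]; noncomm_ring

set_option maxHeartbeats 1000000 in
lemma pair_CW (j l : Fin m) :
    (contrOp m j * pderivOp m j) * (mulXOp m l * wedgeOp m l)
      + (mulXOp m l * wedgeOp m l) * (contrOp m j * pderivOp m j)
      = if j = l then mulXOp m j * pderivOp m j + contrOp m j * wedgeOp m j else 0 := by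
  set W := wedgeOp m
  set C := contrOp m
  set D := pderivOp m
  set Xo := mulXOp m
  by_cases hjl : j = l
  · subst hjl
    rw [if_pos rfl]
    calc (C j * D j) * (Xo j * W j) + (Xo j * W j) * (C j * D j)
        = C j * (D j * Xo j) * W j + Xo j * (W j * C j) * D j := by noncomm_ring
      _ = C j * (Xo j * D j + 1) * W j + Xo j * (W j * C j) * D j := by rw [comm_DX_self]
      _ = Xo j * (C j * W j) * D j + C j * W j + Xo j * (W j * C j) * D j := by
          rw [show C j * (Xo j * D j + 1) * W j
              = (C j * Xo j) * (D j * W j) + C j * W j from by noncomm_ring,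
            ← comm_XC j j, comm_DW j j]
          noncomm_ring
      _ = Xo j * (W j * C j + C j * W j) * D j + C j * W j := by noncomm_ring
      _ = Xo j * D j + C j * W j := by rw [anticomm_WC, if_pos rfl]; noncomm_ring
  · rw [if_neg hjl]
    calc (C j * D j) * (Xo l * W l) + (Xo l * W l) * (C j * D j)
        = C j * (D j * Xo l) * W l + Xo l * (W l * C j) * D j := by noncomm_ring
      _ = C j * (Xo l * D j) * W l + Xo l * (W l * C j) * D j := by rw [comm_DX_ne hjl]
      _ = Xo l * (C j * W l) * D j + Xo l * (W l * C j) * D j := by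
          rw [show C j * (Xo l * D j) * W l = (C j * Xo l) * (D j * W l) from by noncomm_ring,
            ← comm_XC l j, comm_DW j l]
          noncomm_ring
      _ = Xo l * (W l * C j + C j * W l) * D j := by noncomm_ring
      _ = 0 := by rw [anticomm_WC l j, if_neg (fun h => hjl h.symm)]; noncomm_ring

end HodgeAux
end
noncomputable section
open MvPolynomial Finset
namespace HodgeAux
variable {m : ℕ}

lemma mul_neg' (a b : PForm m →ₗ[ℝ] PForm m) : a * -b = -(a * b) := by
  apply LinearMap.ext; intro P
  simp [Module.End.mul_apply]

lemma neg_mul' (a b : PForm m →ₗ[ℝ] PForm m) : -a * b = -(a * b) := by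
  apply LinearMap.ext; intro P
  simp [Module.End.mul_apply]

lemma neg_mul_neg' (a b : PForm m →ₗ[ℝ] PForm m) : -a * -b = a * b := by
  rw [neg_mul', mul_neg', neg_neg]

lemma neg_add' (a b : PForm m →ₗ[ℝ] PForm m) : -a + -b = -(a + b) := by
  apply LinearMap.ext; intro P
  simp only [LinearMap.add_apply, LinearMap.neg_apply]
  abel

lemma sum_pair_zero (f g : Fin m → (PForm m →ₗ[ℝ] PForm m))
    (h : ∀ j l, f j * g l + g l * f j = 0) :
    (∑ j, f j) * (∑ l, g l) + (∑ l, g l) * (∑ j, f j) = 0 := by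
  rw [Finset.sum_mul_sum, Finset.sum_mul_sum, Finset.sum_comm (s := univ),
    ← Finset.sum_add_distrib]
  refine Finset.sum_eq_zero fun j _ => ?_
  rw [← Finset.sum_add_distrib]
  exact Finset.sum_eq_zero fun l _ => h l j

lemma sum_pair_diag (f g h : Fin m → (PForm m →ₗ[ℝ] PForm m))
    (hp : ∀ j l, f j * g l + g l * f j = if j = l then h j else 0) :
    (∑ j, f j) * (∑ l, g l) + (∑ l, g l) * (∑ j, f j) = ∑ j, h j := by
  rw [Finset.sum_mul_sum, Finset.sum_mul_sum, Finset.sum_comm (s := univ),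
    ← Finset.sum_add_distrib]
  refine Finset.sum_congr rfl fun j _ => ?_
  rw [← Finset.sum_add_distrib]
  calc (∑ l, (f l * g j + g j * f l)) = ∑ l, if l = j then h l else 0 :=
        Finset.sum_congr rfl fun l _ => hp l j
    _ = h j := by rw [Finset.sum_ite_eq' univ j (fun l => h l), if_pos (Finset.mem_univ j)]

lemma op_I1 : dOp m * xOp m + xOp m * dOp m = 0 := by
  set T : PForm m →ₗ[ℝ] PForm m := ∑ l, mulXOp m l ∘ₗ wedgeOp m l with hT
  have key : dOp m * T + T * dOp m = 0 := by
    rw [hT]; unfold dOp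
    simp only [← Module.End.mul_eq_comp]
    exact sum_pair_zero _ _ (fun j l => pair_WW j l)
  have hx : xOp m = -T := rfl
  rw [hx, mul_neg', neg_mul', neg_add', key, neg_zero]

lemma op_I2 : dStarOp m * xStarOp m + xStarOp m * dStarOp m = 0 := by
  set U : PForm m →ₗ[ℝ] PForm m := ∑ j, contrOp m j ∘ₗ pderivOp m j with hU
  have key : U * xStarOp m + xStarOp m * U = 0 := by
    rw [hU]; unfold xStarOp
    simp only [← Module.End.mul_eq_comp]
    exact sum_pair_zero _ _ (fun j l => pair_CC j l)
  have hd : dStarOp m = -U := rfl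
  rw [hd, mul_neg', neg_mul', neg_add', key, neg_zero]

lemma op_I3 : dOp m * xStarOp m + xStarOp m * dOp m = eulerOp m + skewEulerOp m := by
  unfold dOp xStarOp
  simp only [← Module.End.mul_eq_comp]
  rw [sum_pair_diag _ _ (fun j => mulXOp m j * pderivOp m j + wedgeOp m j * contrOp m j)
    (fun j l => pair_WC j l)]
  rw [Finset.sum_add_distrib]
  rfl

lemma op_I4 : dStarOp m * xOp m + xOp m * dStarOp m
    = eulerOp m + ((m : ℕ) • (1 : PForm m →ₗ[ℝ] PForm m) - skewEulerOp m) := by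
  set T : PForm m →ₗ[ℝ] PForm m := ∑ l, mulXOp m l ∘ₗ wedgeOp m l with hT
  set U : PForm m →ₗ[ℝ] PForm m := ∑ j, contrOp m j ∘ₗ pderivOp m j with hU
  have key : U * T + T * U = eulerOp m + ((m : ℕ) • 1 - skewEulerOp m) := by
    rw [hT, hU]
    simp only [← Module.End.mul_eq_comp]
    rw [sum_pair_diag _ _ (fun j => mulXOp m j * pderivOp m j + contrOp m j * wedgeOp m j)
      (fun j l => pair_CW j l)]
    rw [Finset.sum_add_distrib]
    refine congrArg₂ (· + ·) rfl ?_
    have hcw : ∀ j : Fin m, contrOp m j * wedgeOp m j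
        = 1 - wedgeOp m j * contrOp m j := by
      intro j
      have h := anticomm_WC j j
      rw [if_pos rfl] at h
      apply LinearMap.ext; intro P
      have := congrArg (fun (f : PForm m →ₗ[ℝ] PForm m) => f P) h
      simp only [LinearMap.add_apply] at this
      simp only [LinearMap.sub_apply]
      rw [← this]
      abel
    calc (∑ j, contrOp m j * wedgeOp m j)
        = ∑ j : Fin m, ((1 : PForm m →ₗ[ℝ] PForm m) - wedgeOp m j * contrOp m j) :=
          Finset.sum_congr rfl fun j _ => hcw j
      _ = (m : ℕ) • 1 - skewEulerOp m := by
          rw [Finset.sum_sub_distrib, Finset.sum_const, Finset.card_univ, Fintype.card_fin]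
          rfl
  have hd : dStarOp m = -U := rfl
  have hx : xOp m = -T := rfl
  rw [hd, hx, neg_mul_neg', neg_mul_neg', key]

end HodgeAux
end
noncomputable section
open MvPolynomial Finset
namespace HodgeAux
variable {m : ℕ}

lemma euler_monomial (d : Fin m →₀ ℕ) (c : ℝ) (j : Fin m) :
    X j * pderiv j (monomial d c) = (d j) • monomial d c := by
  rw [pderiv_monomial]
  by_cases hd : d j = 0
  · simp [hd]
  · have hle : Finsupp.single j 1 ≤ d := by
      rw [Finsupp.single_le_iff]
      omega
    rw [X, monomial_mul, one_mul, add_tsub_cancel_of_le hle]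
    rw [smul_monomial]
    congr 1
    rw [nsmul_eq_mul, mul_comm]

lemma euler_poly {n : ℕ} (p : MvPolynomial (Fin m) ℝ) (hp : p.IsHomogeneous n) :
    ∑ j, X j * pderiv j p = (n : ℝ) • p := by
  calc ∑ j, X j * pderiv j p
      = ∑ j, X j * pderiv j (∑ d ∈ p.support, monomial d (coeff d p)) := by rw [← as_sum p]
    _ = ∑ j, ∑ d ∈ p.support, X j * pderiv j (monomial d (coeff d p)) := by
        simp only [map_sum, Finset.mul_sum]
    _ = ∑ d ∈ p.support, ∑ j, X j * pderiv j (monomial d (coeff d p)) := Finset.sum_comm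
    _ = ∑ d ∈ p.support, (n : ℝ) • monomial d (coeff d p) := by
        refine Finset.sum_congr rfl fun d hd => ?_
        have hdeg : (Finsupp.weight (1 : Fin m → ℕ)) d = n :=
          hp (mem_support_iff.1 hd)
        have hdeg' : ∑ j, d j = n := by
          rw [← hdeg, show (Finsupp.weight (1 : Fin m → ℕ)) = Finsupp.degree from
            (Finsupp.degree_eq_weight_one (R := ℕ)).symm, Finsupp.degree]
          exact (Finset.sum_subset (Finset.subset_univ _)
            (fun x _ hx => Finsupp.notMem_support_iff.1 hx)).symm
        calc ∑ j, X j * pderiv j (monomial d (coeff d p))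
            = ∑ j, (d j) • monomial d (coeff d p) :=
              Finset.sum_congr rfl fun j _ => euler_monomial _ _ _
          _ = (∑ j, d j) • monomial d (coeff d p) := by rw [Finset.sum_smul]
          _ = (n : ℝ) • monomial d (coeff d p) := by
              rw [hdeg']
              rw [Nat.cast_smul_eq_nsmul]
    _ = (n : ℝ) • p := by rw [← Finset.smul_sum, ← as_sum p]

lemma eulerOp_apply_hom {n : ℕ} (P : PForm m) (hP : IsHomForm m n P) :
    eulerOp m P = (n : ℝ) • P := by
  funext I
  unfold eulerOp
  simp only [LinearMap.sum_apply, LinearMap.comp_apply]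
  rw [Finset.sum_apply]
  calc ∑ j, (mulXOp m j ∘ₗ pderivOp m j) P I
      = ∑ j, X j * pderiv j (P I) := rfl
    _ = (n : ℝ) • P I := euler_poly (P I) (hP I)
    _ = ((n : ℝ) • P) I := rfl

lemma skewEulerOp_apply_sform {s : ℕ} (P : PForm m) (hP : IsSForm m s P) :
    skewEulerOp m P = (s : ℝ) • P := by
  funext I
  unfold skewEulerOp
  simp only [LinearMap.sum_apply, LinearMap.comp_apply]
  rw [Finset.sum_apply]
  have hterm : ∀ j : Fin m, (wedgeOp m j) ((contrOp m j) P) I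
      = if j ∈ I then P I else 0 := by
    intro j
    rw [wedgeOp_apply]
    by_cases hj : j ∈ I
    · rw [if_pos hj, if_pos hj, contrOp_apply, if_neg (Finset.notMem_erase j I),
        Finset.insert_erase hj, sgn_erase j j I hj, if_neg (lt_irrefl j), one_mul,
        smul_smul, sgn_mul_self, one_smul]
    · rw [if_neg hj, if_neg hj]
  rw [Finset.sum_congr rfl fun j _ => hterm j]
  rw [Finset.sum_ite_mem, Finset.univ_inter, Finset.sum_const]
  by_cases hI : I.card = s
  · rw [hI]
    show s • P I = ((s : ℝ) • P) I
    rw [Pi.smul_apply, Nat.cast_smul_eq_nsmul]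
  · show #I • P I = ((s:ℝ) • P) I
    rw [hP I hI, Pi.smul_apply, hP I hI]
    simp

end HodgeAux
end
noncomputable section
open MvPolynomial Finset
namespace HodgeAux
variable {m : ℕ}

lemma isHom_smul {n : ℕ} (c : ℝ) {p : MvPolynomial (Fin m) ℝ} (hp : p.IsHomogeneous n) :
    (c • p).IsHomogeneous n :=
  (homogeneousSubmodule (Fin m) ℝ n).smul_mem c hp

lemma Hset_smul {s n : ℕ} (c : ℝ) {P : PForm m} (hP : P ∈ Hset m s n) :
    c • P ∈ Hset m s n := by
  obtain ⟨h1, h2, h3, h4⟩ := hP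
  refine ⟨fun I hI => ?_, fun I => ?_, ?_, ?_⟩
  · show c • P I = 0
    rw [h1 I hI, smul_zero]
  · exact isHom_smul c (h2 I)
  · rw [map_smul, h3, smul_zero]
  · rw [map_smul, h4, smul_zero]

lemma isHomForm_xOp {n : ℕ} {P : PForm m} (hh : IsHomForm m n P) :
    IsHomForm m (n + 1) (xOp m P) := by
  intro I
  have hx : xOp m P I = -∑ j, X j * (if j ∈ I then sgn m j I • P (I.erase j) else 0) := by
    show ((-(∑ j, mulXOp m j ∘ₗ wedgeOp m j)) P) I = _
    simp only [LinearMap.neg_apply, LinearMap.sum_apply, Pi.neg_apply, Finset.sum_apply,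
      LinearMap.comp_apply]
    rfl
  rw [hx]
  rw [show ((n:ℕ) + 1) = 1 + n from by omega] at *
  refine Submodule.neg_mem (homogeneousSubmodule (Fin m) ℝ (1 + n)) ?_
  refine Submodule.sum_mem _ fun j _ => ?_
  refine (isHomogeneous_X ℝ j).mul ?_
  split
  · exact isHom_smul _ (hh _)
  · exact isHomogeneous_zero _ ℝ n

lemma isHomForm_xStarOp {n : ℕ} {P : PForm m} (hh : IsHomForm m n P) :
    IsHomForm m (n + 1) (xStarOp m P) := by
  intro I
  have hx : xStarOp m P I
      = ∑ j, X j * (if j ∈ I then 0 else sgn m j I • P (insert j I)) := by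
    show ((∑ j, mulXOp m j ∘ₗ contrOp m j) P) I = _
    simp only [LinearMap.sum_apply, Finset.sum_apply, LinearMap.comp_apply]
    rfl
  rw [hx]
  rw [show ((n:ℕ) + 1) = 1 + n from by omega] at *
  refine Submodule.sum_mem (homogeneousSubmodule (Fin m) ℝ (1 + n)) fun j _ => ?_
  refine (isHomogeneous_X ℝ j).mul ?_
  split
  · exact isHomogeneous_zero _ ℝ n
  · exact isHom_smul _ (hh _)

lemma key_x {s n : ℕ} {P : PForm m} (hP : P ∈ Hset m s n) :
    (dOp m + dStarOp m) (xOp m P) = ((n : ℝ) + m - s) • P := by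
  obtain ⟨h1, h2, h3, h4⟩ := hP
  have hd : dOp m (xOp m P) = 0 := by
    have := congrArg (fun (f : PForm m →ₗ[ℝ] PForm m) => f P) op_I1
    simp only [LinearMap.add_apply, Module.End.mul_apply, LinearMap.zero_apply] at this
    rw [h3, map_zero, add_zero] at this
    exact this
  have hds : dStarOp m (xOp m P) = ((n : ℝ) + m - s) • P := by
    have h := congrArg (fun (f : PForm m →ₗ[ℝ] PForm m) => f P) op_I4
    simp only [LinearMap.add_apply, Module.End.mul_apply, LinearMap.zero_apply,
      LinearMap.sub_apply, LinearMap.smul_apply, Module.End.one_apply] at h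
    rw [h4, map_zero, add_zero, eulerOp_apply_hom P h2, skewEulerOp_apply_sform P h1] at h
    rw [h]
    rw [← Nat.cast_smul_eq_nsmul ℝ m P]
    rw [← sub_smul, ← add_smul]
    congr 1
    ring
  rw [LinearMap.add_apply, hd, hds, zero_add]

lemma key_xstar {s n : ℕ} {P : PForm m} (hP : P ∈ Hset m s n) :
    (dOp m + dStarOp m) (xStarOp m P) = ((n : ℝ) + s) • P := by
  obtain ⟨h1, h2, h3, h4⟩ := hP
  have hds : dStarOp m (xStarOp m P) = 0 := by
    have := congrArg (fun (f : PForm m →ₗ[ℝ] PForm m) => f P) op_I2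
    simp only [LinearMap.add_apply, Module.End.mul_apply, LinearMap.zero_apply] at this
    rw [h4, map_zero, add_zero] at this
    exact this
  have hd : dOp m (xStarOp m P) = ((n : ℝ) + s) • P := by
    have h := congrArg (fun (f : PForm m →ₗ[ℝ] PForm m) => f P) op_I3
    simp only [LinearMap.add_apply, Module.End.mul_apply] at h
    rw [h3, map_zero, add_zero, eulerOp_apply_hom P h2, skewEulerOp_apply_sform P h1] at h
    rw [h, ← add_smul]
  rw [LinearMap.add_apply, hd, hds, add_zero]

end HodgeAux
end
open MvPolynomial Finset HodgeAux in
/-- `(xH^s_{k-1} ⊕ x*H^s_{k-1}) ∩ ℳ_k = M_{s,k}`. -/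
theorem inter_monogenic_eq_Mset (m s k : ℕ) (hs : 1 ≤ s) (hsm : s ≤ m - 1) (hk : 1 ≤ k) :
    {Q : PForm m | ∃ P₁ ∈ Hset m s (k - 1), ∃ P₂ ∈ Hset m s (k - 1),
        Q = xOp m P₁ + xStarOp m P₂} ∩ Mk m k = Mset m s k := by
  have hm : s + 1 ≤ m := by omega
  have hk1 : (1 : ℝ) ≤ (k : ℝ) := by exact_mod_cast hk
  have hs1 : (1 : ℝ) ≤ (s : ℝ) := by exact_mod_cast hs
  have hsm' : (s : ℝ) + 1 ≤ (m : ℝ) := by exact_mod_cast hm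
  have ha : (0 : ℝ) < (k : ℝ) - 1 + m - s := by linarith
  have hb : (0 : ℝ) < (k : ℝ) - 1 + s := by linarith
  set a : ℝ := (k : ℝ) - 1 + m - s with ha'
  set b : ℝ := (k : ℝ) - 1 + s with hb'
  have hcast : ((k - 1 : ℕ) : ℝ) = (k : ℝ) - 1 := by
    push_cast [hk]
    ring
  have hkx : ∀ P : PForm m, P ∈ Hset m s (k - 1) →
      (dOp m + dStarOp m) (xOp m P) = a • P := by
    intro P hP
    rw [key_x hP, ha', hcast]
  have hkxs : ∀ P : PForm m, P ∈ Hset m s (k - 1) →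
      (dOp m + dStarOp m) (xStarOp m P) = b • P := by
    intro P hP
    rw [key_xstar hP, hb', hcast]
  ext Q
  simp only [Set.mem_inter_iff, Set.mem_setOf_eq]
  constructor
  · rintro ⟨⟨P₁, hP₁, P₂, hP₂, rfl⟩, hhom, hzero⟩
    have heq : a • P₁ + b • P₂ = 0 := by
      rw [map_add, hkx P₁ hP₁, hkxs P₂ hP₂] at hzero
      exact hzero
    have hP1 : P₁ = (-(a⁻¹ * b)) • P₂ := by
      have h2 : a • P₁ = -(b • P₂) := eq_neg_of_add_eq_zero_left heq
      calc P₁ = a⁻¹ • (a • P₁) := by rw [smul_smul, inv_mul_cancel₀ ha.ne', one_smul]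
        _ = a⁻¹ • (-(b • P₂)) := by rw [h2]
        _ = (-(a⁻¹ * b)) • P₂ := by rw [smul_neg, smul_smul, neg_smul]
    refine ⟨a⁻¹ • P₂, Hset_smul _ hP₂, ?_⟩
    rw [LinearMap.sub_apply, LinearMap.smul_apply, LinearMap.smul_apply,
      map_smul, map_smul, hP1, map_smul]
    match_scalars <;> field_simp <;> simp only [ha', hb']
  · rintro ⟨P, hP, rfl⟩
    refine ⟨⟨(-b) • P, Hset_smul _ hP, a • P, Hset_smul _ hP, ?_⟩, ?_, ?_⟩
    · rw [LinearMap.sub_apply, LinearMap.smul_apply, LinearMap.smul_apply,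
        map_smul, map_smul, neg_smul, sub_eq_neg_add]
    · intro I
      have hhx : IsHomForm m k (xOp m P) := by
        have := isHomForm_xOp (P := P) (fun J => hP.2.1 J)
        rwa [Nat.sub_add_cancel hk] at this
      have hhxs : IsHomForm m k (xStarOp m P) := by
        have := isHomForm_xStarOp (P := P) (fun J => hP.2.1 J)
        rwa [Nat.sub_add_cancel hk] at this
      show ((a • xStarOp m - b • xOp m) P) I |>.IsHomogeneous k
      rw [LinearMap.sub_apply, LinearMap.smul_apply, LinearMap.smul_apply]
      have : (a • xStarOp m P - b • xOp m P) I
          = a • (xStarOp m P I) - b • (xOp m P I) := rfl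
      rw [this]
      exact (homogeneousSubmodule (Fin m) ℝ k).sub_mem
        (isHom_smul _ (hhxs I)) (isHom_smul _ (hhx I))
    · rw [LinearMap.sub_apply, LinearMap.smul_apply, LinearMap.smul_apply,
        map_sub, map_smul, map_smul, hkx P hP, hkxs P hP,
        smul_smul, smul_smul, mul_comm, sub_self]
end
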